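/- Let N ≥ 2 be an integer and let V* = (V*_1, …, V*_N) ∈ ℝ^N satisfy P(V*_i) = P(V*_j) for all 1 ≤ i, j ≤ N and (1/N) Σ_{j=1}^N V*_j = V̄ > 0. Then V*_j > 0 for all 1 ≤ j ≤ N. -/

import Mathlib

/-! Both `v` and `p` are sign-preserving, so `P(V)` has the sign of `V`. Equal pressures thus force
all the `V*_j` to lie on the same side of `0`, and a positive mean rules out the nonpositive side. -/

/-- Droplet volume as a function of height: v(h) = h(h²+3)/4. -/
noncomputable def vol (h : ℝ) : ℝ := h * (h ^ 2 + 3) / 4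

/-- Droplet pressure as a function of height: p(h) = 4h/(h²+1). -/
noncomputable def pres (h : ℝ) : ℝ := 4 * h / (h ^ 2 + 1)

/-- Pressure as a function of volume: P(V) = p(h) where v(h) = V
(v is a strictly increasing bijection of ℝ, so its inverse is well defined). -/
noncomputable def Pfun (V : ℝ) : ℝ := pres (Function.invFun vol V)

/-- Δ_s(x) = |x|^s sgn(x). -/
noncomputable def Ds (s x : ℝ) : ℝ := |x| ^ s * Real.sign x

lemma vol_zero : vol 0 = 0 := by
  simp [vol]

lemma vol_strictMono : StrictMono vol := by
  intro a b hab
  unfold vol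
  nlinarith [sq_nonneg (a + b), sq_nonneg a, sq_nonneg b]

lemma vol_surjective : Function.Surjective vol := by
  intro V
  have hcont : Continuous vol := by unfold vol; fun_prop
  set a := min (-1) V
  set b := max 1 V
  have ha : a ≤ -1 ∧ a ≤ V := ⟨min_le_left _ _, min_le_right _ _⟩
  have hb : 1 ≤ b ∧ V ≤ b := ⟨le_max_left _ _, le_max_right _ _⟩
  have hlow : vol a ≤ V := by unfold vol; nlinarith [sq_nonneg a]
  have hhigh : V ≤ vol b := by unfold vol; nlinarith [sq_nonneg b]
  obtain ⟨h, -, hh⟩ :=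
    intermediate_value_Icc (by linarith) hcont.continuousOn ⟨hlow, hhigh⟩
  exact ⟨h, hh⟩

lemma pres_pos_iff (h : ℝ) : 0 < pres h ↔ 0 < h := by
  rw [pres, div_pos_iff_of_pos_right (by positivity)]
  constructor <;> intro <;> linarith

lemma Pfun_pos_iff (V : ℝ) : 0 < Pfun V ↔ 0 < V := by
  have hinv : vol (Function.invFun vol V) = V := Function.invFun_eq (vol_surjective V)
  rw [Pfun, pres_pos_iff, ← vol_strictMono.lt_iff_lt, vol_zero, hinv]

lemma exists_pos_of_mean_pos {ι : Type*} [Fintype ι] (f : ι → ℝ)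
    (hmean : 0 < (1 / (Fintype.card ι : ℝ)) * ∑ i, f i) : ∃ i, 0 < f i := by
  have hsum : ∑ _i : ι, (0 : ℝ) < ∑ i, f i := by
    simpa using pos_of_mul_pos_right hmean (by positivity)
  obtain ⟨i, -, hi⟩ := Finset.exists_lt_of_sum_lt hsum
  exact ⟨i, hi⟩

theorem stmt10_general (N : ℕ) (Vstar : Fin N → ℝ) (Vbar : ℝ) (hVbar : 0 < Vbar)
    (heq : ∀ i j, Pfun (Vstar i) = Pfun (Vstar j))
    (hmean : (1 / (N : ℝ)) * ∑ j, Vstar j = Vbar) :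
    ∀ j, 0 < Vstar j := by
  obtain ⟨i, hi⟩ := exists_pos_of_mean_pos Vstar (by rwa [Fintype.card_fin, hmean])
  intro j
  rw [← Pfun_pos_iff, heq j i]
  exact (Pfun_pos_iff _).mpr hi

theorem stmt10 (N : ℕ) (hN : 2 ≤ N) (Vstar : Fin N → ℝ) (Vbar : ℝ) (hVbar : 0 < Vbar)
    (heq : ∀ i j, Pfun (Vstar i) = Pfun (Vstar j))
    (hmean : (1 / (N : ℝ)) * ∑ j, Vstar j = Vbar) :
    ∀ j, 0 < Vstar j :=
  stmt10_general N Vstar Vbar hVbar heq hmean
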